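/- Let G be a finite undirected graph without isolated vertices and without self-loops. Let Q2 be the Boolean conjunctive query with head H() whose body consists of the atoms E(x_v, x_w) and E(x_w, x_v) for every edge {v,w} of G (with a distinct variable x_v for each vertex v), and let Q1 be the Boolean conjunctive query H() ← E(b,r), E(r,y), E(y,b), E(r,b), E(y,r), E(b,y), C(b,r,y) over variables b, r, y. Then Q1 ⊑ Q2 if and only if G is properly 3-colourable, i.e., there is a homomorphism from Q2 to Q1 if and only if the vertices of G can be coloured with three colours so that adjacent vertices receive different colours. Moreover, Q1 is acyclic. -/

import Mathlib

/-- A relational atom (or fact): a relation symbol with a list of arguments.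
Arguments are natural numbers, serving both as variables and as data values. -/
structure Atom where
  rel : ℕ
  args : List ℕ
deriving DecidableEq

/-- Apply a substitution to an atom. -/
def mapAtom (f : ℕ → ℕ) (A : Atom) : Atom := ⟨A.rel, A.args.map f⟩

/-- The variables of an atom. -/
def Atom.vars (A : Atom) : Finset ℕ := A.args.toFinset

/-- The variables of a finite set of atoms. -/
def varsOf (B : Finset Atom) : Finset ℕ := B.biUnion Atom.vars

/-- A conjunctive query: a head atom and a finite set of body atoms. -/
structure CQ where
  head : Atom
  body : Finset Atom
deriving DecidableEq

/-- All variables of a conjunctive query. -/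
def CQ.vars (Q : CQ) : Finset ℕ := Q.head.vars ∪ varsOf Q.body

/-- A schema: a set of relation symbols together with an arity function. -/
structure Schema where
  rels : Set ℕ
  ar : ℕ → ℕ

/-- An atom (or fact) over a schema. -/
def atomOver (σ : Schema) (A : Atom) : Prop :=
  A.rel ∈ σ.rels ∧ A.args.length = σ.ar A.rel

/-- `Q` is a (well-formed) conjunctive query over schema `σ`:
nonempty body of σ-atoms, head relation symbol not in σ, and safety. -/
def isCQ (σ : Schema) (Q : CQ) : Prop :=
  Q.body.Nonempty ∧ (∀ A ∈ Q.body, atomOver σ A) ∧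
  Q.head.rel ∉ σ.rels ∧ Q.head.vars ⊆ varsOf Q.body

/-- A database is a set of facts (finiteness is imposed where needed). -/
abbrev Database := Set Atom

/-- A database over a schema. -/
def isDBOver (σ : Schema) (D : Database) : Prop := ∀ F ∈ D, atomOver σ F

/-- The result of a conjunctive query on a database. -/
def evalCQ (Q : CQ) (D : Database) : Set Atom :=
  { F | ∃ ν : ℕ → ℕ, (∀ A ∈ Q.body, mapAtom ν A ∈ D) ∧ mapAtom ν Q.head = F }

/-- Containment of conjunctive queries. -/
def containedCQ (Q1 Q2 : CQ) : Prop :=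
  ∀ D : Database, D.Finite → evalCQ Q1 D ⊆ evalCQ Q2 D

/-- Equivalence of conjunctive queries. -/
def equivCQ (Q1 Q2 : CQ) : Prop :=
  ∀ D : Database, D.Finite → evalCQ Q1 D = evalCQ Q2 D

/-- A conjunctive query is minimal if no equivalent CQ has strictly fewer body atoms. -/
def isMinimal (Q : CQ) : Prop :=
  ∀ Q2 : CQ, equivCQ Q Q2 → Q.body.card ≤ Q2.body.card

/-- A homomorphism from `Q2` to `Q1`. -/
def isHom (h : ℕ → ℕ) (Q2 Q1 : CQ) : Prop :=
  (∀ A ∈ Q2.body, mapAtom h A ∈ Q1.body) ∧ mapAtom h Q2.head = Q1.head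

/-- A body homomorphism from `Q2` to `Q1`. -/
def isBodyHom (h : ℕ → ℕ) (Q2 Q1 : CQ) : Prop :=
  ∀ A ∈ Q2.body, mapAtom h A ∈ Q1.body

/-- A set of views over σ: each view is a CQ over σ and views have
pairwise distinct head relation symbols. -/
def isViewSet (σ : Schema) (𝒱 : Finset CQ) : Prop :=
  (∀ V ∈ 𝒱, isCQ σ V) ∧
  ∀ V ∈ 𝒱, ∀ W ∈ 𝒱, V ≠ W → V.head.rel ≠ W.head.rel

/-- The 𝒱-defined database 𝒱(D). -/
def viewDB (𝒱 : Finset CQ) (D : Database) : Database :=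
  ⋃ V ∈ 𝒱, evalCQ V D

/-- `Q'` is a CQ over the schema σ_𝒱 of the head relations of the views 𝒱. -/
def overViews (𝒱 : Finset CQ) (Q' : CQ) : Prop :=
  Q'.body.Nonempty ∧
  (∀ A ∈ Q'.body, ∃ V ∈ 𝒱, A.rel = V.head.rel ∧ A.args.length = V.head.args.length) ∧
  (∀ V ∈ 𝒱, Q'.head.rel ≠ V.head.rel) ∧
  Q'.head.vars ⊆ varsOf Q'.body

/-- `Q'` is a 𝒱-rewriting of `Q`: `Q'` is over σ_𝒱 and `Q'(𝒱(D)) = Q(D)`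
for every (finite) database `D` over σ. -/
def isRewriting (σ : Schema) (𝒱 : Finset CQ) (Q Q' : CQ) : Prop :=
  overViews 𝒱 Q' ∧
  ∀ D : Database, D.Finite → isDBOver σ D →
    evalCQ Q' (viewDB 𝒱 D) = evalCQ Q D

/-- `T` is a join tree for the atom set `B`. -/
def joinTreeProp (B : Finset Atom) (T : SimpleGraph {A : Atom // A ∈ B}) : Prop :=
  T.IsTree ∧
  ∀ (x : ℕ) (A A' : {A : Atom // A ∈ B}) (p : T.Walk A A'), p.IsPath →
    x ∈ A.1.vars → x ∈ A'.1.vars → ∀ C ∈ p.support, x ∈ C.1.vars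

/-- The atom set `B` has a join tree. -/
def hasJoinTree (B : Finset Atom) : Prop :=
  ∃ T : SimpleGraph {A : Atom // A ∈ B}, joinTreeProp B T

/-- A conjunctive query is acyclic if its body has a join tree. -/
def isAcyclicCQ (Q : CQ) : Prop := hasJoinTree Q.body

/-- A conjunctive query is free-connex acyclic. -/
def isFreeConnex (Q : CQ) : Prop :=
  isAcyclicCQ Q ∧ hasJoinTree (insert Q.head Q.body)

/-- The bridge variables of `𝒜 ⊆ body(Q)`. -/
def bvars (Q : CQ) (𝒜 : Finset Atom) : Finset ℕ :=
  varsOf 𝒜 ∩ (Q.head.vars ∪ varsOf (Q.body \ 𝒜))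

/-- An application of a view `V`: a substitution that does not unify any
quantified variable of `V` with another variable of `V`. -/
def isApplication (V : CQ) (α : ℕ → ℕ) : Prop :=
  ∀ x ∈ varsOf V.body, x ∉ V.head.vars →
    ∀ y ∈ CQ.vars V, y ≠ x → α x ≠ α y

/-- The query α(V). -/
def applyCQ (α : ℕ → ℕ) (V : CQ) : CQ :=
  ⟨mapAtom α V.head, V.body.image (mapAtom α)⟩

/-- `(𝒜, V, α, ψ)` is a cover description for `Q`. -/
def isCoverDesc (Q : CQ) (𝒜 : Finset Atom) (V : CQ) (α ψ : ℕ → ℕ) : Prop :=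
  𝒜 ⊆ Q.body ∧ isApplication V α ∧
  𝒜 ⊆ V.body.image (mapAtom α) ∧
  bvars Q 𝒜 ⊆ V.head.vars.image α ∧
  isBodyHom ψ (applyCQ α V) Q ∧
  ∀ x ∈ varsOf 𝒜, ψ x = x

/-- A cover partition for `Q` over `𝒱`: a collection of cover descriptions
whose atom sets partition `body(Q)`. -/
def isCoverPartition (Q : CQ) (𝒱 : Finset CQ) (m : ℕ)
    (𝒜 : Fin m → Finset Atom) (V : Fin m → CQ) (α ψ : Fin m → ℕ → ℕ) : Prop :=
  (∀ i, V i ∈ 𝒱 ∧ isCoverDesc Q (𝒜 i) (V i) (α i) (ψ i)) ∧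
  ∀ A ∈ Q.body, ∃! i, A ∈ 𝒜 i

/-- Consistency of a cover partition: a variable of any `α_j(V_j)` lies in the
range of another `α_i` only if it also lies in `bvars(𝒜_j)`. -/
def isConsistent (Q : CQ) (m : ℕ) (𝒜 : Fin m → Finset Atom) (V : Fin m → CQ)
    (α : Fin m → ℕ → ℕ) : Prop :=
  ∀ i j : Fin m, i ≠ j → ∀ z ∈ CQ.vars (applyCQ (α j) (V j)),
    (∃ x ∈ CQ.vars (V i), α i x = z) → z ∈ bvars Q (𝒜 j)

/-- The query `Q_𝒞` induced by a (consistent) cover partition. -/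
def inducedCQ (Q : CQ) (m : ℕ) (V : Fin m → CQ) (α : Fin m → ℕ → ℕ) : CQ :=
  ⟨Q.head, Finset.image (fun i => mapAtom (α i) (V i).head) Finset.univ⟩

/-- Quantified variable disjointness for a family of view applications. -/
def QVD (m : ℕ) (V : Fin m → CQ) (α : Fin m → ℕ → ℕ) : Prop :=
  ∀ i j : Fin m, i ≠ j → ∀ x ∈ varsOf (V i).body, x ∉ (V i).head.vars →
    ∀ y ∈ CQ.vars (V j), α i x ≠ α j y

/-- `QE` is an expansion of `Q'` with respect to the views `𝒱`. -/
def isExpansion (𝒱 : Finset CQ) (Q' QE : CQ) : Prop :=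
  ∃ (m : ℕ) (A' : Fin m → Atom) (V : Fin m → CQ) (α : Fin m → ℕ → ℕ),
    (∀ i, V i ∈ 𝒱 ∧ isApplication (V i) (α i) ∧ A' i = mapAtom (α i) (V i).head) ∧
    Q'.body = Finset.image A' Finset.univ ∧
    QVD m V α ∧
    QE.head = Q'.head ∧
    QE.body = Finset.biUnion Finset.univ (fun i => (V i).body.image (mapAtom (α i)))

/-- `atoms(x)`: the body atoms of `Q` containing the variable `x`. -/
def atomsWith (Q : CQ) (x : ℕ) : Finset Atom :=
  Q.body.filter (fun A => x ∈ A.vars)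

/-- Hierarchical conjunctive queries. -/
def isHierarchical (Q : CQ) : Prop :=
  ∀ x y : ℕ, atomsWith Q x ⊆ atomsWith Q y ∨ atomsWith Q y ⊆ atomsWith Q x ∨
    atomsWith Q x ∩ atomsWith Q y = ∅

/-- q-hierarchical conjunctive queries. -/
def isQHierarchical (Q : CQ) : Prop :=
  isHierarchical Q ∧ ∀ x y : ℕ, atomsWith Q x ⊂ atomsWith Q y →
    x ∈ Q.head.vars → y ∈ Q.head.vars

/-- `P` is a partition of `body(Q)` witnessing weak head arity at most `k`. -/
def witnessesWHA (Q : CQ) (k n : ℕ) (P : Fin n → Finset Atom) : Prop :=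
  (∀ i, (P i).Nonempty) ∧ (∀ i, P i ⊆ Q.body) ∧ (∀ A ∈ Q.body, ∃! i, A ∈ P i) ∧
  (∀ i, (varsOf (P i) ∩ Q.head.vars).card ≤ k) ∧
  (∀ i j, i ≠ j → ∀ x ∈ varsOf (P i), x ∈ varsOf (P j) → x ∈ Q.head.vars)

/-- `Q` has weak head arity at most `k`. -/
def hasWHAle (Q : CQ) (k : ℕ) : Prop := ∃ n P, witnessesWHA Q k n P

/-- The weak head arity of `Q`. -/
noncomputable def weakHeadArity (Q : CQ) : ℕ := sInf {k | hasWHAle Q k}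

/-- The cover graph of `Q`: vertices are the body atoms, with an edge between
two atoms iff they share a variable not occurring in the head. -/
def coverGraph (Q : CQ) : SimpleGraph {A : Atom // A ∈ Q.body} :=
  SimpleGraph.fromRel (fun A B => ∃ x, x ∈ A.1.vars ∧ x ∈ B.1.vars ∧ x ∉ Q.head.vars)

/-- A subset `s` of the atom set `B` is connected in the (join) tree `T`. -/
def connectedIn (B : Finset Atom) (T : SimpleGraph {A : Atom // A ∈ B}) (s : Finset Atom) : Prop :=
  (T.induce {A : {A : Atom // A ∈ B} | A.1 ∈ s}).Connected

/-- The Boolean query `Q2` derived from graph `G`: body atoms `E(x_v, x_w)` (relation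
symbol `0`) for all adjacent `v, w` (both orientations, since adjacency is symmetric);
vertex `v` gets variable `v + 3`. Head relation symbol is `2`. -/
def graphQuery (N : ℕ) (G : SimpleGraph (Fin N)) [DecidableRel G.Adj] : CQ :=
  ⟨⟨2, []⟩,
    Finset.image (fun p : Fin N × Fin N => (⟨0, [p.1.val + 3, p.2.val + 3]⟩ : Atom))
      (Finset.univ.filter (fun p : Fin N × Fin N => G.Adj p.1 p.2))⟩

/-- The Boolean query `Q1 : H() ← E(b,r), E(r,y), E(y,b), E(r,b), E(y,r), E(b,y),
C(b,r,y)` with `b = 0`, `r = 1`, `y = 2`; relation symbols `E = 0`, `C = 1`, head `2`. -/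
def threeColQuery : CQ :=
  ⟨⟨2, []⟩,
    ({⟨0, [0, 1]⟩, ⟨0, [1, 2]⟩, ⟨0, [2, 0]⟩, ⟨0, [1, 0]⟩, ⟨0, [2, 1]⟩, ⟨0, [0, 2]⟩,
      ⟨1, [0, 1, 2]⟩} : Finset Atom)⟩


/-! ### Auxiliary lemmas -/

section Star

variable {V : Type*} (c : V)

/-- The star graph with center `c`. -/
def starGraph : SimpleGraph V where
  Adj a b := a ≠ b ∧ (a = c ∨ b = c)
  symm := ⟨by rintro a b ⟨h1, h2⟩; exact ⟨h1.symm, h2.symm⟩⟩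
  loopless := ⟨by rintro a ⟨h1, _⟩; exact h1 rfl⟩

variable {c}

lemma star_support {a b : V} (p : (starGraph c).Walk a b) (hp : p.IsPath) :
    ∀ x ∈ p.support, x = a ∨ x = c ∨ x = b := by
  match p with
  | SimpleGraph.Walk.nil =>
    intro x hx
    simp only [SimpleGraph.Walk.support_nil, List.mem_singleton] at hx
    exact Or.inl hx
  | SimpleGraph.Walk.cons h1 SimpleGraph.Walk.nil =>
    intro x hx
    simp only [SimpleGraph.Walk.support_cons, SimpleGraph.Walk.support_nil,
      List.mem_cons, List.mem_singleton] at hx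
    rcases hx with rfl | rfl | h
    · exact Or.inl rfl
    · exact Or.inr (Or.inr rfl)
    · exact absurd h (List.not_mem_nil (a := x))
  | SimpleGraph.Walk.cons (v := b1) h1 (SimpleGraph.Walk.cons (v := d) h2 r) =>
    rcases SimpleGraph.Walk.cons_isPath_iff _ _ |>.mp hp with ⟨hq, ha⟩
    rcases SimpleGraph.Walk.cons_isPath_iff _ _ |>.mp hq with ⟨hr, hb1⟩
    by_cases hbc : b1 = c
    · subst hbc
      match r with
      | SimpleGraph.Walk.nil =>
        intro x hx
        simp only [SimpleGraph.Walk.support_cons, SimpleGraph.Walk.support_nil,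
          List.mem_cons, List.mem_singleton] at hx
        rcases hx with rfl | rfl | rfl | h
        · exact Or.inl rfl
        · exact Or.inr (Or.inl rfl)
        · exact Or.inr (Or.inr rfl)
        · exact absurd h (List.not_mem_nil (a := x))
      | SimpleGraph.Walk.cons h3 s =>
        exfalso
        rcases h3.2 with rfl | rfl
        · exact h2.1 rfl
        · refine hb1 ?_
          rw [SimpleGraph.Walk.support_cons]
          exact List.mem_cons_of_mem _ s.start_mem_support
    · exfalso
      have hac : a = c := by rcases h1.2 with h | h; exact h; exact absurd h hbc
      have hdc : d = c := by rcases h2.2 with h | h; exact absurd h hbc; exact h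
      refine ha ?_
      rw [SimpleGraph.Walk.support_cons]
      refine List.mem_cons_of_mem _ ?_
      subst hac
      subst hdc
      exact r.start_mem_support

lemma star_path_len2 {a b : V} (p : (starGraph c).Walk a b) (hp : p.IsPath)
    (hl : 2 ≤ p.length) : a ≠ c ∧ b ≠ c := by
  match p with
  | SimpleGraph.Walk.nil => simp at hl
  | SimpleGraph.Walk.cons h1 SimpleGraph.Walk.nil => simp at hl
  | SimpleGraph.Walk.cons (v := b1) h1 (SimpleGraph.Walk.cons (v := d) h2 r) =>
    rcases SimpleGraph.Walk.cons_isPath_iff _ _ |>.mp hp with ⟨hq, ha⟩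
    rcases SimpleGraph.Walk.cons_isPath_iff _ _ |>.mp hq with ⟨hr, hb1⟩
    by_cases hbc : b1 = c
    · subst hbc
      match r with
      | SimpleGraph.Walk.nil =>
        exact ⟨h1.1, fun h => h2.1 h.symm⟩
      | SimpleGraph.Walk.cons h3 s =>
        exfalso
        rcases h3.2 with rfl | rfl
        · exact h2.1 rfl
        · refine hb1 ?_
          rw [SimpleGraph.Walk.support_cons]
          exact List.mem_cons_of_mem _ s.start_mem_support
    · exfalso
      have hac : a = c := by rcases h1.2 with h | h; exact h; exact absurd h hbc
      have hdc : d = c := by rcases h2.2 with h | h; exact absurd h hbc; exact h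
      refine ha ?_
      rw [SimpleGraph.Walk.support_cons]
      refine List.mem_cons_of_mem _ ?_
      subst hac
      subst hdc
      exact r.start_mem_support

lemma star_isTree [DecidableEq V] : (starGraph c).IsTree := by
  refine ⟨(SimpleGraph.connected_iff _).mpr ⟨?_, ⟨c⟩⟩, ?_⟩
  · have adj : ∀ x y : V, x ≠ y → (x = c ∨ y = c) → (starGraph c).Adj x y :=
      fun x y h1 h2 => ⟨h1, h2⟩
    intro a b
    by_cases hab : a = b
    · exact hab ▸ SimpleGraph.Reachable.refl a
    · by_cases hac : a = c
      · exact (adj a b hab (Or.inl hac)).reachable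
      · by_cases hbc : b = c
        · exact (adj a b hab (Or.inr hbc)).reachable
        · exact ((adj a c hac (Or.inr rfl)).reachable).trans
            ((adj c b (fun h => hbc h.symm) (Or.inl rfl)).reachable)
  · intro v p hp
    match p with
    | SimpleGraph.Walk.nil => exact hp.ne_nil rfl
    | SimpleGraph.Walk.cons (v := b) h q =>
      have hq : q.IsPath := by
        constructor
        · exact (SimpleGraph.Walk.isTrail_cons _ _ |>.mp hp.isTrail).1
        · have := hp.2
          simpa using this
      have hlen : 2 ≤ q.length := by
        have := hp.three_le_length
        simp only [SimpleGraph.Walk.length_cons] at this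
        omega
      rcases star_path_len2 q hq hlen with ⟨hbc, hvc⟩
      rcases h.2 with h' | h'
      · exact hvc h'
      · exact hbc h'

end Star


lemma mem_threeCol_of_fin3 : ∀ a b : Fin 3, a ≠ b →
    (⟨0, [a.val, b.val]⟩ : Atom) ∈ threeColQuery.body := by decide

lemma threeCol_inv : ∀ a b : ℕ, (⟨0, [a, b]⟩ : Atom) ∈ threeColQuery.body →
    a < 3 ∧ b < 3 ∧ a ≠ b := by
  intro a b h
  simp only [threeColQuery, Finset.mem_insert, Finset.mem_singleton, Atom.mk.injEq,
    List.cons.injEq, and_true] at h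
  rcases h with ⟨_, h⟩ | ⟨_, h⟩ | ⟨_, h⟩ | ⟨_, h⟩ | ⟨_, h⟩ | ⟨_, h⟩ | ⟨h, _⟩ <;> omega

lemma threeCol_vars_sub : ∀ A ∈ threeColQuery.body, ∀ x ∈ A.vars,
    x ∈ (⟨1, [0, 1, 2]⟩ : Atom).vars := by
  intro A hA x hx
  simp only [threeColQuery, Finset.mem_insert, Finset.mem_singleton] at hA
  rcases hA with rfl | rfl | rfl | rfl | rfl | rfl | rfl <;>
    (simp only [Atom.vars, List.toFinset_cons, List.toFinset_nil, insert_empty_eq,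
      Finset.mem_insert, Finset.mem_singleton] at hx ⊢ <;> omega)

lemma center_mem : (⟨1, [0, 1, 2]⟩ : Atom) ∈ threeColQuery.body := by decide

lemma edge_atom_mem (N : ℕ) (G : SimpleGraph (Fin N)) [DecidableRel G.Adj]
    {v w : Fin N} (hvw : G.Adj v w) :
    (⟨0, [v.val + 3, w.val + 3]⟩ : Atom) ∈ (graphQuery N G).body := by
  simp only [graphQuery, Finset.mem_image, Finset.mem_filter, Finset.mem_univ, true_and]
  exact ⟨(v, w), hvw, rfl⟩

/-- For a finite graph `G` without isolated vertices (and without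
self-loops, as `G` is a simple graph): `Q1 ⊑ Q2` iff `G` is 3-colourable, equivalently
there is a homomorphism from `Q2` to `Q1` iff `G` is 3-colourable; and `Q1` is acyclic. -/
theorem statement17 (N : ℕ) (G : SimpleGraph (Fin N)) [DecidableRel G.Adj]
    (hiso : ∀ v : Fin N, ∃ w, G.Adj v w) :
    (containedCQ threeColQuery (graphQuery N G) ↔ G.Colorable 3) ∧
    ((∃ h : ℕ → ℕ, isHom h (graphQuery N G) threeColQuery) ↔ G.Colorable 3) ∧
    isAcyclicCQ threeColQuery := by
  classical
  have homiff : (∃ h : ℕ → ℕ, isHom h (graphQuery N G) threeColQuery) ↔ G.Colorable 3 := by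
    constructor
    · rintro ⟨h, hbody, -⟩
      have key : ∀ v w : Fin N, G.Adj v w →
          h (v.val + 3) < 3 ∧ h (w.val + 3) < 3 ∧ h (v.val + 3) ≠ h (w.val + 3) := by
        intro v w hvw
        have hm := hbody _ (edge_atom_mem N G hvw)
        have : mapAtom h (⟨0, [v.val + 3, w.val + 3]⟩ : Atom) =
            ⟨0, [h (v.val + 3), h (w.val + 3)]⟩ := rfl
        rw [this] at hm
        exact threeCol_inv _ _ hm
      have hlt : ∀ v : Fin N, h (v.val + 3) < 3 := by
        intro v
        obtain ⟨w, hw⟩ := hiso v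
        exact (key v w hw).1
      refine ⟨SimpleGraph.Coloring.mk (fun v => ⟨h (v.val + 3), hlt v⟩) ?_⟩
      intro v w hvw hcontra
      exact (key v w hvw).2.2 (congrArg Fin.val hcontra)
    · rintro ⟨C⟩
      set h : ℕ → ℕ := fun n => if hn : 3 ≤ n ∧ n - 3 < N then (C ⟨n - 3, hn.2⟩).val else 0
        with hdef
      have hval : ∀ v : Fin N, h (v.val + 3) = (C v).val := by
        intro v
        have hcond : 3 ≤ v.val + 3 ∧ v.val + 3 - 3 < N := ⟨by omega, by simpa using v.isLt⟩
        simp only [hdef, dif_pos hcond]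
        have hfin : (⟨v.val + 3 - 3, hcond.2⟩ : Fin N) = v := Fin.ext (by simp)
        rw [hfin]
      refine ⟨h, ?_, rfl⟩
      intro A hA
      simp only [graphQuery, Finset.mem_image, Finset.mem_filter, Finset.mem_univ,
        true_and] at hA
      obtain ⟨⟨v, w⟩, hvw, rfl⟩ := hA
      have : mapAtom h (⟨0, [v.val + 3, w.val + 3]⟩ : Atom) =
          ⟨0, [(C v).val, (C w).val]⟩ := by
        simp [mapAtom, hval]
      rw [this]
      exact mem_threeCol_of_fin3 _ _ (C.valid hvw)
  have contiff : containedCQ threeColQuery (graphQuery N G) ↔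
      (∃ h : ℕ → ℕ, isHom h (graphQuery N G) threeColQuery) := by
    constructor
    · intro hc
      have hD : (threeColQuery.head : Atom) ∈
          evalCQ threeColQuery (↑threeColQuery.body : Database) := by
        refine ⟨id, ?_, ?_⟩
        · intro A hA
          simpa [mapAtom, List.map_id] using hA
        · simp [mapAtom, List.map_id]
      have := hc (↑threeColQuery.body) (threeColQuery.body.finite_toSet) hD
      obtain ⟨ν, hb, hh⟩ := this
      exact ⟨ν, fun A hA => hb A hA, hh⟩
    · rintro ⟨h, hb, hh⟩
      intro D _ F hF
      obtain ⟨ν, hν, hhead⟩ := hF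
      refine ⟨ν ∘ h, ?_, ?_⟩
      · intro A hA
        have : mapAtom (ν ∘ h) A = mapAtom ν (mapAtom h A) := by
          simp [mapAtom, List.map_map]
        rw [this]
        exact hν _ (hb A hA)
      · have : mapAtom (ν ∘ h) (graphQuery N G).head =
            mapAtom ν (mapAtom h (graphQuery N G).head) := by
          simp [mapAtom, List.map_map]
        rw [this, hh]
        exact hhead
  refine ⟨contiff.trans homiff, homiff, ?_⟩
  -- acyclicity
  refine ⟨starGraph (⟨⟨1, [0, 1, 2]⟩, center_mem⟩ : {A : Atom // A ∈ threeColQuery.body}), ?_, ?_⟩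
  · exact star_isTree
  · intro x A A' p hp hxA hxA' C hC
    rcases star_support p hp C hC with rfl | rfl | rfl
    · exact hxA
    · exact threeCol_vars_sub A.1 A.2 x hxA
    · exact hxA'
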